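/- arXiv:2001.07572 — 4 statements merged into one kernel-verified Lean document; each statement's English description precedes it below -/
import Mathlib

section
/- Let C be a real n×n matrix and P a symmetric real n×n matrix. If P is positive definite and P − Cᵀ P C is positive definite, then every complex eigenvalue λ of C (i.e., every λ ∈ ℂ for which there exists a nonzero complex vector v with (the complexification of) C applied to v equal to λ v) satisfies |λ| < 1. -/
open Matrix
open scoped ComplexOrder

/-!
For an eigenvector `v` of `C` with eigenvalue `λ`, the Hermitian form of `Cᴴ P C` at `v` is
`|λ|²` times that of `P`, so `v* (P - Cᴴ P C) v = (1 - |λ|²) v* P v`. Both forms are positive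
on the complex vector `v` because complexification preserves positive definiteness (the form of
`P` at `x + i y` is `xᵀ P x + yᵀ P y`), hence `1 - |λ|² > 0`.
-/

namespace Matrix

variable {n : Type*} [Fintype n]

theorem star_dotProduct_conjTranspose_mul_mul_mulVec_of_mulVec_eq_smul {R : Type*}
    [CommSemiring R] [StarRing R] {A M : Matrix n n R} {lam : R} {v : n → R}
    (hv : M *ᵥ v = lam • v) :
    star v ⬝ᵥ (Mᴴ * A * M) *ᵥ v = star lam * lam * (star v ⬝ᵥ A *ᵥ v) := by
  rw [← mulVec_mulVec, ← mulVec_mulVec, dotProduct_mulVec, ← star_mulVec, hv,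
    star_smul, smul_dotProduct, mulVec_smul, dotProduct_smul, smul_eq_mul, smul_eq_mul, mul_assoc]

variable {𝕜 : Type*} [RCLike 𝕜]

theorem norm_lt_one_of_posDef_sub_conjTranspose_mul_mul {A M : Matrix n n 𝕜} (hA : A.PosDef)
    (hAM : (A - Mᴴ * A * M).PosDef) {lam : 𝕜} {v : n → 𝕜} (hv0 : v ≠ 0)
    (hv : M *ᵥ v = lam • v) : ‖lam‖ < 1 := by
  have hquad : star v ⬝ᵥ (A - Mᴴ * A * M) *ᵥ v =
      ((1 - ‖lam‖ ^ 2 : ℝ) : 𝕜) * (star v ⬝ᵥ A *ᵥ v) := by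
    rw [sub_mulVec, dotProduct_sub,
      star_dotProduct_conjTranspose_mul_mul_mulVec_of_mulVec_eq_smul hv, RCLike.star_def,
      RCLike.conj_mul]
    push_cast
    ring
  have hpos := hAM.re_dotProduct_pos hv0
  rw [hquad, RCLike.re_ofReal_mul] at hpos
  have hgap : 0 < 1 - ‖lam‖ ^ 2 := pos_of_mul_pos_left hpos (hA.re_dotProduct_pos hv0).le
  exact (sq_lt_one_iff₀ (norm_nonneg lam)).1 (by linarith)

theorem re_star_dotProduct_map_ofReal_mulVec (P : Matrix n n ℝ) (v : n → 𝕜) :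
    RCLike.re (star v ⬝ᵥ P.map ((↑) : ℝ → 𝕜) *ᵥ v) =
      (fun i ↦ RCLike.re (v i)) ⬝ᵥ P *ᵥ (fun i ↦ RCLike.re (v i)) +
        (fun i ↦ RCLike.im (v i)) ⬝ᵥ P *ᵥ (fun i ↦ RCLike.im (v i)) := by
  simp [dotProduct, mulVec, Finset.mul_sum, Finset.sum_add_distrib]

theorem PosDef.map_ofReal {P : Matrix n n ℝ} (hP : P.PosDef) : (P.map ((↑) : ℝ → 𝕜)).PosDef := by
  have hherm : (P.map ((↑) : ℝ → 𝕜)).IsHermitian :=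
    hP.isHermitian.map _ fun _ ↦ (RCLike.conj_ofReal _).symm
  refine .of_dotProduct_mulVec_pos hherm fun v hv ↦ RCLike.pos_iff.2
    ⟨?_, hherm.im_star_dotProduct_mulVec_self v⟩
  rw [re_star_dotProduct_map_ofReal_mulVec]
  set x : n → ℝ := fun i ↦ RCLike.re (v i)
  set y : n → ℝ := fun i ↦ RCLike.im (v i)
  have hxy : x ≠ 0 ∨ y ≠ 0 := by
    by_contra! h
    exact hv <| funext fun i ↦
      RCLike.ext (by simpa using congrFun h.1 i) (by simpa using congrFun h.2 i)
  have hnonneg (z : n → ℝ) : 0 ≤ z ⬝ᵥ P *ᵥ z := by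
    simpa using hP.posSemidef.dotProduct_mulVec_nonneg z
  rcases hxy with hx | hy
  · exact add_pos_of_pos_of_nonneg (by simpa using hP.dotProduct_mulVec_pos hx) (hnonneg y)
  · exact add_pos_of_nonneg_of_pos (hnonneg x) (by simpa using hP.dotProduct_mulVec_pos hy)

theorem map_ofReal_sub_transpose_mul_mul (P C : Matrix n n ℝ) :
    (P - Cᵀ * P * C).map ((↑) : ℝ → 𝕜) =
      P.map (↑) - (C.map ((↑) : ℝ → 𝕜))ᴴ * P.map (↑) * C.map (↑) := by
  rw [← conjTranspose_map _ fun _ ↦ (RCLike.conj_ofReal _).symm]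
  simp [Matrix.map_sub, Matrix.map_mul]

end Matrix

theorem lyapunov_posdef_implies_stable_general {n : ℕ}
    (C P : Matrix (Fin n) (Fin n) ℝ)
    (hP : P.PosDef) (hLyap : (P - Cᵀ * P * C).PosDef) :
    ∀ (lam : ℂ) (v : Fin n → ℂ), v ≠ 0 →
      (C.map (fun x : ℝ => (x : ℂ))).mulVec v = lam • v → ‖lam‖ < 1 := by
  intro lam v hv0 hv
  have hLyapC := hLyap.map_ofReal (𝕜 := ℂ)
  rw [map_ofReal_sub_transpose_mul_mul] at hLyapC
  exact norm_lt_one_of_posDef_sub_conjTranspose_mul_mul hP.map_ofReal hLyapC hv0 hv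

/-- If `P ≻ 0` and `P - Cᵀ P C ≻ 0`, then every complex eigenvalue `λ` of (the
complexification of) `C` satisfies `|λ| < 1`. -/
theorem lyapunov_posdef_implies_stable {n : ℕ} (hn : 0 < n)
    (C P : Matrix (Fin n) (Fin n) ℝ) (hPsymm : P.IsSymm)
    (hP : P.PosDef) (hLyap : (P - Cᵀ * P * C).PosDef) :
    ∀ (lam : ℂ) (v : Fin n → ℂ), v ≠ 0 →
      (C.map (fun x : ℝ => (x : ℂ))).mulVec v = lam • v → ‖lam‖ < 1 :=
  lyapunov_posdef_implies_stable_general C P hP hLyap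
end

section
/- Let A be a real n×n matrix, B a real n×m matrix, K a real m×n matrix, P and Q symmetric real n×n matrices with P positive semidefinite and Q positive semidefinite, and R a symmetric positive definite real m×m matrix. If the Kalman constraint equations Q + Aᵀ P (A + B K) − P = 0 and R K + Bᵀ P (A + B K) = 0 hold, then the matrix R + Bᵀ P B is positive definite (hence invertible), K = −(R + Bᵀ P B)⁻¹ Bᵀ P A, and P satisfies the algebraic Riccati equation P = Q + Aᵀ P A − Aᵀ P B (R + Bᵀ P B)⁻¹ Bᵀ P A. -/
open Matrix

/-- If the Kalman constraint equations hold with `P ⪰ 0`, `Q ⪰ 0` and `R ≻ 0`,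
then `R + Bᵀ P B ≻ 0`, `K = -(R + Bᵀ P B)⁻¹ Bᵀ P A`, and `P` satisfies the
algebraic Riccati equation. -/
theorem kalman_implies_riccati {n m : ℕ} (hn : 0 < n) (hm : 0 < m)
    (A P Q : Matrix (Fin n) (Fin n) ℝ) (B : Matrix (Fin n) (Fin m) ℝ)
    (K : Matrix (Fin m) (Fin n) ℝ) (R : Matrix (Fin m) (Fin m) ℝ)
    (hPsymm : P.IsSymm) (hQsymm : Q.IsSymm) (hRsymm : R.IsSymm)
    (hP : P.PosSemidef) (hQ : Q.PosSemidef) (hR : R.PosDef)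
    (h1 : Q + Aᵀ * P * (A + B * K) - P = 0)
    (h2 : R * K + Bᵀ * P * (A + B * K) = 0) :
    (R + Bᵀ * P * B).PosDef ∧
    K = -((R + Bᵀ * P * B)⁻¹ * Bᵀ * P * A) ∧
    P = Q + Aᵀ * P * A - Aᵀ * P * B * (R + Bᵀ * P * B)⁻¹ * Bᵀ * P * A := by
  have hBT : Bᵀ = Bᴴ := (conjTranspose_eq_transpose_of_trivial B).symm
  have hS : (R + Bᵀ * P * B).PosDef := by
    rw [hBT]
    exact hR.add_posSemidef (hP.conjTranspose_mul_mul_same B)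
  have hSinv : (R + Bᵀ * P * B)⁻¹ * (R + Bᵀ * P * B) = 1 :=
    nonsing_inv_mul _ hS.det_pos.ne'.isUnit
  have e2 : (R + Bᵀ * P * B) * K + Bᵀ * P * A = R * K + Bᵀ * P * (A + B * K) := by
    rw [Matrix.add_mul]
    simp only [Matrix.mul_assoc, Matrix.mul_add, Matrix.add_mul, Matrix.mul_neg, Matrix.neg_mul, neg_neg, sub_eq_add_neg]; abel
  have h2' : (R + Bᵀ * P * B) * K = -(Bᵀ * P * A) :=
    eq_neg_of_add_eq_zero_left (e2.trans h2)
  have hK : K = -((R + Bᵀ * P * B)⁻¹ * Bᵀ * P * A) := by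
    have h := congrArg (fun M => (R + Bᵀ * P * B)⁻¹ * M) h2'
    rw [← Matrix.mul_assoc, hSinv, Matrix.one_mul] at h
    rw [h]
    simp [Matrix.mul_assoc]
  refine ⟨hS, hK, ?_⟩
  have e1 : Q + Aᵀ * P * A + Aᵀ * P * B * K - P = Q + Aᵀ * P * (A + B * K) - P := by
    simp only [Matrix.mul_assoc, Matrix.mul_add, Matrix.add_mul, Matrix.mul_neg, Matrix.neg_mul, neg_neg, sub_eq_add_neg]; abel
  have h1' : P = Q + Aᵀ * P * A + Aᵀ * P * B * K :=
    (sub_eq_zero.mp (e1.trans h1)).symm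
  calc P = Q + Aᵀ * P * A + Aᵀ * P * B * K := h1'
    _ = Q + Aᵀ * P * A - Aᵀ * P * B * (R + Bᵀ * P * B)⁻¹ * Bᵀ * P * A := by
        rw [hK]
        simp only [Matrix.mul_assoc, Matrix.mul_add, Matrix.add_mul, Matrix.mul_neg, Matrix.neg_mul, neg_neg, sub_eq_add_neg,
          Matrix.mul_smul, Matrix.smul_mul, neg_smul, one_smul]
end

section
/- Let A be a real n×n matrix, B a real n×m matrix, and K a real m×n matrix. If there exist symmetric matrices P ⪰ 0, Q ⪰ 0 (n×n) and R ≻ 0 (m×m) satisfying the Kalman constraint equations Q + Aᵀ P (A + B K) − P = 0 and R K + Bᵀ P (A + B K) = 0, then there exist symmetric matrices P' ⪰ 0, Q' ⪰ 0 and R' with R' − I ⪰ 0 satisfying the same equations with the same K. That is, the open constraint R ≻ 0 in the Kalman feasibility problem can be replaced by the closed constraint R ⪰ I without changing the set of feasible gain matrices K. -/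
/-!
The Kalman constraint equations are linear and homogeneous in `(P, Q, R)`, and scaling by a
positive number preserves `P ⪰ 0` and `Q ⪰ 0`. Since `R ≻ 0` has all eigenvalues positive,
a large enough factor `c` makes every eigenvalue of `c • R` at least `1`, i.e. `c • R ⪰ I`.
-/

open Matrix
open scoped ComplexOrder

def IsKalmanSolution {α ι κ : Type*} [Fintype ι] [Fintype κ] [CommRing α]
    (A : Matrix ι ι α) (B : Matrix ι κ α) (K : Matrix κ ι α)
    (P Q : Matrix ι ι α) (R : Matrix κ κ α) : Prop :=
  Q + Aᵀ * P * (A + B * K) - P = 0 ∧ R * K + Bᵀ * P * (A + B * K) = 0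

theorem IsKalmanSolution.smul {α ι κ : Type*} [Fintype ι] [Fintype κ] [CommRing α]
    {A : Matrix ι ι α} {B : Matrix ι κ α} {K : Matrix κ ι α}
    {P Q : Matrix ι ι α} {R : Matrix κ κ α} (h : IsKalmanSolution A B K P Q R) (c : α) :
    IsKalmanSolution A B K (c • P) (c • Q) (c • R) := by
  obtain ⟨hPQ, hRK⟩ := h
  constructor
  · calc c • Q + Aᵀ * (c • P) * (A + B * K) - c • P
        = c • (Q + Aᵀ * P * (A + B * K) - P) := by
          simp only [Matrix.mul_smul, Matrix.smul_mul, smul_sub, smul_add]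
      _ = 0 := by rw [hPQ, smul_zero]
  · calc c • R * K + Bᵀ * (c • P) * (A + B * K)
        = c • (R * K + Bᵀ * P * (A + B * K)) := by
          simp only [Matrix.mul_smul, Matrix.smul_mul, smul_add]
      _ = 0 := by rw [hRK, smul_zero]

theorem Matrix.PosDef.exists_pos_smul_sub_one_posSemidef {ι 𝕜 : Type*} [Fintype ι]
    [DecidableEq ι] [RCLike 𝕜] {R : Matrix ι ι 𝕜} (hR : R.PosDef) :
    ∃ c : ℝ, 0 < c ∧ (c • R - 1).PosSemidef := by
  set ev := hR.1.eigenvalues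
  -- a bound on the reciprocals rather than a minimum eigenvalue, which would need `ι` nonempty
  obtain ⟨b, hb⟩ := (Set.finite_range fun i => (ev i)⁻¹).bddAbove
  set c := max b 1
  have hc : ∀ i, 1 ≤ c * ev i := fun i => by
    have hev := hR.eigenvalues_pos i
    calc 1 = (ev i)⁻¹ * ev i := (inv_mul_cancel₀ hev.ne').symm
      _ ≤ c * ev i := by
        gcongr
        exact (hb ⟨i, rfl⟩).trans (le_max_left b 1)
  refine ⟨c, zero_lt_one.trans_le (le_max_right b 1), ?_⟩
  have hconj : c • R - 1 = Unitary.conjStarAlgAut 𝕜 _ hR.1.eigenvectorUnitary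
      (diagonal fun i => ((c * ev i - 1 : ℝ) : 𝕜)) := by
    rw [RCLike.real_smul_eq_coe_smul (K := 𝕜)]
    conv_lhs => rw [hR.1.spectral_theorem]
    rw [← map_one (Unitary.conjStarAlgAut 𝕜 _ hR.1.eigenvectorUnitary), ← map_smul, ← map_sub]
    congr 1
    ext i j
    by_cases hij : i = j <;> simp [diagonal, hij, ev]
  rw [hconj, Unitary.conjStarAlgAut_apply, Unitary.isUnit_coe.posSemidef_star_right_conjugate_iff,
    posSemidef_diagonal_iff]
  intro i
  exact_mod_cast sub_nonneg.mpr (hc i)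

theorem kalman_open_to_closed_general {n m : ℕ}
    (A : Matrix (Fin n) (Fin n) ℝ) (B : Matrix (Fin n) (Fin m) ℝ)
    (K : Matrix (Fin m) (Fin n) ℝ)
    (h : ∃ (P Q : Matrix (Fin n) (Fin n) ℝ) (R : Matrix (Fin m) (Fin m) ℝ),
      P.PosSemidef ∧ Q.PosSemidef ∧ R.PosDef ∧
      Q + Aᵀ * P * (A + B * K) - P = 0 ∧
      R * K + Bᵀ * P * (A + B * K) = 0) :
    ∃ (P' Q' : Matrix (Fin n) (Fin n) ℝ) (R' : Matrix (Fin m) (Fin m) ℝ),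
      P'.PosSemidef ∧ Q'.PosSemidef ∧ (R' - 1).PosSemidef ∧
      Q' + Aᵀ * P' * (A + B * K) - P' = 0 ∧
      R' * K + Bᵀ * P' * (A + B * K) = 0 := by
  obtain ⟨P, Q, R, hP, hQ, hR, hKalman⟩ := h
  obtain ⟨c, hc, hcR⟩ := hR.exists_pos_smul_sub_one_posSemidef
  exact ⟨c • P, c • Q, c • R, hP.smul hc.le, hQ.smul hc.le, hcR,
    IsKalmanSolution.smul hKalman c⟩

/-- The open constraint `R ≻ 0` in the Kalman feasibility problem can be replaced
by the closed constraint `R ⪰ I` without changing the set of feasible gains `K`. -/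
theorem kalman_open_to_closed {n m : ℕ} (hn : 0 < n) (hm : 0 < m)
    (A : Matrix (Fin n) (Fin n) ℝ) (B : Matrix (Fin n) (Fin m) ℝ)
    (K : Matrix (Fin m) (Fin n) ℝ)
    (h : ∃ (P Q : Matrix (Fin n) (Fin n) ℝ) (R : Matrix (Fin m) (Fin m) ℝ),
      P.PosSemidef ∧ Q.PosSemidef ∧ R.PosDef ∧
      Q + Aᵀ * P * (A + B * K) - P = 0 ∧
      R * K + Bᵀ * P * (A + B * K) = 0) :
    ∃ (P' Q' : Matrix (Fin n) (Fin n) ℝ) (R' : Matrix (Fin m) (Fin m) ℝ),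
      P'.PosSemidef ∧ Q'.PosSemidef ∧ (R' - 1).PosSemidef ∧
      Q' + Aᵀ * P' * (A + B * K) - P' = 0 ∧
      R' * K + Bᵀ * P' * (A + B * K) = 0 :=
  kalman_open_to_closed_general A B K h
end

section
/- Let C be a real n×n matrix all of whose complex eigenvalues λ satisfy |λ| < 1, and let S be a symmetric positive semidefinite real n×n matrix. Then the series Σ_{t=0}^∞ (Cᵀ)ᵗ S Cᵗ converges, and its sum P is a symmetric positive semidefinite matrix satisfying the discrete-time Lyapunov equation P = S + Cᵀ P C. -/
/-!
Gelfand's formula turns the eigenvalue bound into a geometric bound `‖Cᵗ‖ ≤ rᵗ` with `r < 1`,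
for the Frobenius norm, which is submultiplicative and invariant under transposition; hence the
series converges absolutely. Its terms `(Cᵗ)ᵀ S Cᵗ` are positive semidefinite and this cone is
closed, so `P ⪰ 0`. Conjugating the series by `C` shifts it by one term, which is the equation
`P = S + Cᵀ P C`.
-/

open Filter Matrix
open scoped NNReal

section BanachAlgebra

variable {A : Type*} [NormedRing A] [NormedAlgebra ℂ A] [CompleteSpace A]

theorem spectrum.eventually_norm_pow_le_of_spectralRadius_lt {a : A} {r : ℝ≥0}
    (h : spectralRadius ℂ a < r) : ∀ᶠ t : ℕ in atTop, ‖a ^ t‖ ≤ r ^ t := by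
  filter_upwards [(pow_nnnorm_pow_one_div_tendsto_nhds_spectralRadius a).eventually_lt_const h,
    eventually_gt_atTop 0] with t ht ht0
  have ht0' : (0 : ℝ) < t := by exact_mod_cast ht0
  have := ENNReal.rpow_lt_rpow ht ht0'
  rw [← ENNReal.rpow_mul, one_div_mul_cancel ht0'.ne', ENNReal.rpow_one, ENNReal.rpow_natCast,
    ← ENNReal.coe_pow, ENNReal.coe_lt_coe] at this
  exact_mod_cast this.le

theorem spectrum.exists_lt_one_eventually_norm_pow_le {a : A}
    (h : ∀ z ∈ spectrum ℂ a, ‖z‖ < 1) :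
    ∃ r : ℝ≥0, r < 1 ∧ ∀ᶠ t : ℕ in atTop, ‖a ^ t‖ ≤ r ^ t := by
  rcases subsingleton_or_nontrivial A with hA | hA
  · exact ⟨0, zero_lt_one, .of_forall fun t => by simp [Subsingleton.elim (a ^ t) 0]⟩
  obtain ⟨r, hρr, hr1⟩ := ENNReal.lt_iff_exists_nnreal_btwn.mp
    (spectralRadius_lt_of_forall_lt a (r := 1) fun z hz => by exact_mod_cast h z hz)
  exact ⟨r, by exact_mod_cast hr1, eventually_norm_pow_le_of_spectralRadius_lt hρr⟩

end BanachAlgebra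

theorem summable_pow_mul_mul_pow_of_norm_pow_le {R : Type*} [NormedRing R] [CompleteSpace R]
    {a b : R} {r : ℝ≥0} (hr : r < 1) (ha : ∀ᶠ t : ℕ in atTop, ‖a ^ t‖ ≤ r ^ t)
    (hb : ∀ᶠ t : ℕ in atTop, ‖b ^ t‖ ≤ r ^ t) (s : R) :
    Summable fun t : ℕ => b ^ t * s * a ^ t := by
  have hgeom : Summable fun t : ℕ => ‖s‖ * ((r : ℝ) ^ 2) ^ t :=
    (summable_geometric_of_lt_one (by positivity) (by simpa using hr)).mul_left _
  refine hgeom.of_norm_bounded_eventually_nat ?_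
  filter_upwards [ha, hb] with t hat hbt
  calc ‖b ^ t * s * a ^ t‖ ≤ ‖b ^ t‖ * ‖s‖ * ‖a ^ t‖ := norm_mul₃_le
    _ ≤ r ^ t * ‖s‖ * r ^ t := by gcongr
    _ = ‖s‖ * ((r : ℝ) ^ 2) ^ t := by ring

theorem eq_add_mul_mul_of_hasSum_pow_mul_mul_pow {R : Type*} [Ring R] [TopologicalSpace R]
    [IsTopologicalRing R] [T2Space R] {a b s P : R}
    (h : HasSum (fun t : ℕ => b ^ t * s * a ^ t) P) : P = s + b * P * a := by
  have hshift : HasSum (fun t : ℕ => b ^ (t + 1) * s * a ^ (t + 1)) (P - s) := by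
    simpa using (hasSum_nat_add_iff' 1).mpr h
  have hconj : HasSum (fun t : ℕ => b ^ (t + 1) * s * a ^ (t + 1)) (b * P * a) := by
    refine ((h.mul_left b).mul_right a).congr_fun fun t => ?_
    rw [pow_succ' b, pow_succ a]
    simp only [mul_assoc]
  rw [hconj.unique hshift, add_sub_cancel]

namespace Matrix

theorem exists_mulVec_eq_smul_of_mem_spectrum {K n : Type*} [Field K] [Fintype n]
    [DecidableEq n] {A : Matrix n n K} {z : K} (hz : z ∈ spectrum K A) :
    ∃ v ≠ 0, A *ᵥ v = z • v := by
  rw [← spectrum_toLin', ← Module.End.hasEigenvalue_iff_mem_spectrum] at hz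
  obtain ⟨v, hv⟩ := hz.exists_hasEigenvector
  exact ⟨v, hv.2, by simpa using hv.apply_eq_smul⟩

section PosSemidef

variable {n R : Type*} [Fintype n] [Ring R] [PartialOrder R] [StarRing R] [TopologicalSpace R]
  [IsTopologicalRing R] [ContinuousStar R] [OrderClosedTopology R]

theorem isClosed_setOf_posSemidef : IsClosed {M : Matrix n n R | M.PosSemidef} := by
  simp only [posSemidef_iff_dotProduct_mulVec, Set.ofPred_and, Set.ofPred_forall]
  refine .inter (isClosed_eq (by fun_prop) continuous_id) (isClosed_iInter fun x => ?_)
  exact isClosed_le continuous_const (by fun_prop)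

theorem _root_.HasSum.posSemidef {ι : Type*} [AddLeftMono R] {f : ι → Matrix n n R}
    {P : Matrix n n R} (h : HasSum f P) (hf : ∀ i, (f i).PosSemidef) : P.PosSemidef :=
  isClosed_setOf_posSemidef.mem_of_tendsto h (.of_forall fun s => posSemidef_sum s fun i _ => hf i)

end PosSemidef

section Frobenius

attribute [local instance] frobeniusNormedRing frobeniusNormedAlgebra

variable {n : Type*} [Fintype n] [DecidableEq n] {C : Matrix n n ℝ}

theorem exists_lt_one_eventually_norm_pow_le
    (hC : ∀ z ∈ spectrum ℂ (C.map (fun x : ℝ => (x : ℂ))), ‖z‖ < 1) :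
    ∃ r : ℝ≥0, r < 1 ∧ ∀ᶠ t : ℕ in atTop, ‖C ^ t‖ ≤ r ^ t := by
  obtain ⟨r, hr, h⟩ := spectrum.exists_lt_one_eventually_norm_pow_le hC
  refine ⟨r, hr, h.mono fun t ht => ?_⟩
  have hmap : C.map (fun x : ℝ => (x : ℂ)) ^ t = (C ^ t).map (fun x : ℝ => (x : ℂ)) :=
    (C.map_pow Complex.ofRealHom t).symm
  rwa [hmap, frobenius_norm_map_eq _ _ Complex.norm_real] at ht

theorem summable_transpose_pow_mul_mul_pow
    (hC : ∀ z ∈ spectrum ℂ (C.map (fun x : ℝ => (x : ℂ))), ‖z‖ < 1) (S : Matrix n n ℝ) :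
    Summable fun t : ℕ => (Cᵀ) ^ t * S * C ^ t := by
  obtain ⟨r, hr, h⟩ := exists_lt_one_eventually_norm_pow_le hC
  refine summable_pow_mul_mul_pow_of_norm_pow_le hr h ?_ S
  simpa only [← transpose_pow, frobenius_norm_transpose] using h

end Frobenius

end Matrix

theorem lyapunov_series_solution_general {n : ℕ}
    (C S : Matrix (Fin n) (Fin n) ℝ)
    (hstable : ∀ (lam : ℂ) (v : Fin n → ℂ), v ≠ 0 →
      (C.map (fun x : ℝ => (x : ℂ))).mulVec v = lam • v → ‖lam‖ < 1)
    (hS : S.PosSemidef) :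
    ∃ P : Matrix (Fin n) (Fin n) ℝ,
      HasSum (fun t : ℕ => (Cᵀ) ^ t * S * C ^ t) P ∧
      P.PosSemidef ∧ P = S + Cᵀ * P * C := by
  have hspec : ∀ z ∈ spectrum ℂ (C.map (fun x : ℝ => (x : ℂ))), ‖z‖ < 1 := fun z hz =>
    let ⟨v, hv0, hv⟩ := exists_mulVec_eq_smul_of_mem_spectrum hz
    hstable z v hv0 hv
  have hP := (summable_transpose_pow_mul_mul_pow hspec S).hasSum
  refine ⟨_, hP, hP.posSemidef fun t => ?_, eq_add_mul_mul_of_hasSum_pow_mul_mul_pow hP⟩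
  simpa only [conjTranspose_eq_transpose_of_trivial, transpose_pow] using
    hS.conjTranspose_mul_mul_same (C ^ t)

/-- If `C` is stable (all complex eigenvalues have modulus `< 1`) and `S ⪰ 0`,
then the series `Σₜ (Cᵀ)ᵗ S Cᵗ` converges to a symmetric positive semidefinite
matrix `P` satisfying the discrete-time Lyapunov equation `P = S + Cᵀ P C`. -/
theorem lyapunov_series_solution {n : ℕ} (hn : 0 < n)
    (C S : Matrix (Fin n) (Fin n) ℝ)
    (hstable : ∀ (lam : ℂ) (v : Fin n → ℂ), v ≠ 0 →
      (C.map (fun x : ℝ => (x : ℂ))).mulVec v = lam • v → ‖lam‖ < 1)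
    (hS : S.PosSemidef) :
    ∃ P : Matrix (Fin n) (Fin n) ℝ,
      HasSum (fun t : ℕ => (Cᵀ) ^ t * S * C ^ t) P ∧
      P.PosSemidef ∧ P = S + Cᵀ * P * C :=
  lyapunov_series_solution_general C S hstable hS
end
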